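/- Let ρ ∈ C²(𝕋²×ℝ^{2K}, (0,∞)) satisfy G*ρ = 0 pointwise. Then for all u, v ∈ C_c^∞(𝕋²×ℝ^{2K}, ℝ): ∫ (Gu) v ρ d(y,η) + ∫ u (Gv) ρ d(y,η) = −2 ∫ (∇_y u · Σ ∇_y v + ∇_η u · ΠΓ ∇_η v) ρ d(y,η), where all integrals are over 𝕋²×ℝ^{2K} with respect to Lebesgue measure (the carré-du-champ / Green identity for G under an infinitesimally invariant density). -/

import Mathlib

open MeasureTheory ProbabilityTheory Real Finset Matrix

noncomputable section

/-- The set of Fourier modes `k ∈ ℤ²` with `0 < |k| ≤ K̃`. -/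
def modes (Kt : ℕ) : Finset (ℤ × ℤ) :=
  ((Finset.Icc (-(Kt : ℤ)) (Kt : ℤ)) ×ˢ (Finset.Icc (-(Kt : ℤ)) (Kt : ℤ))).filter
    (fun k => k ≠ (0, 0) ∧ k.1 ^ 2 + k.2 ^ 2 ≤ (Kt : ℤ) ^ 2)

/-- Index set for the real coordinates of `η`: one copy of the modes for the real parts
(`false`) and one for the imaginary parts (`true`); it has cardinality `2K`. -/
abbrev ModeIdx (Kt : ℕ) := {k : ℤ × ℤ // k ∈ modes Kt} × Bool

/-- The state space `ℝ^{2K}` of the Ornstein-Uhlenbeck process. -/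
abbrev EtaSpace (Kt : ℕ) := ModeIdx Kt → ℝ

/-- Euclidean norm of a vector. -/
def euclNorm {ι : Type*} [Fintype ι] (v : ι → ℝ) : ℝ := Real.sqrt (∑ i, (v i) ^ 2)

/-- `|k|` for `k ∈ ℤ²`. -/
def znorm (k : ℤ × ℤ) : ℝ := Real.sqrt ((k.1 : ℝ) ^ 2 + (k.2 : ℝ) ^ 2)

/-- `Γ_k = (κ*|2πk|⁴ + σ*|2πk|²)/|2πk|`. -/
def GammaVal (κ σ : ℝ) (k : ℤ × ℤ) : ℝ :=
  (κ * (2 * π * znorm k) ^ 4 + σ * (2 * π * znorm k) ^ 2) / (2 * π * znorm k)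

/-- `Π_k = (κ*|2πk|⁴ + σ*|2πk|²)⁻¹`. -/
def PiVal (κ σ : ℝ) (k : ℤ × ℤ) : ℝ :=
  (κ * (2 * π * znorm k) ^ 4 + σ * (2 * π * znorm k) ^ 2)⁻¹

/-- The diagonal drift matrix `Γ`. -/
def GammaMat (Kt : ℕ) (κ σ : ℝ) : Matrix (ModeIdx Kt) (ModeIdx Kt) ℝ :=
  Matrix.diagonal fun i => GammaVal κ σ i.1.1

/-- The diagonal covariance matrix `Π`. -/
def PiMat (Kt : ℕ) (κ σ : ℝ) : Matrix (ModeIdx Kt) (ModeIdx Kt) ℝ :=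
  Matrix.diagonal fun i => PiVal κ σ i.1.1

/-- The Gaussian measure `ρ_η = N(0,Π)` on `ℝ^{2K}`; since `Π` is diagonal it is the
product of the one-dimensional Gaussians `N(0, Π_k)`. -/
def rhoEta (Kt : ℕ) (κ σ : ℝ) : Measure (EtaSpace Kt) :=
  Measure.pi fun i => gaussianReal 0 (Real.toNNReal (PiVal κ σ i.1.1))

/-- Partial derivative `∂_i f(x)` of a function on a finite-dimensional coordinate space. -/
def pd {ι : Type*} [Fintype ι] [DecidableEq ι] (i : ι) (f : (ι → ℝ) → ℝ) (x : ι → ℝ) : ℝ :=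
  fderiv ℝ f x (Pi.single i 1)

/-- The Ornstein-Uhlenbeck generator `L_η u = -Γη·∇u + ∑_{i,j} (ΠΓ)_{ij} ∂_i∂_j u`. -/
def OUGen (Kt : ℕ) (κ σ : ℝ) (u : EtaSpace Kt → ℝ) (η : EtaSpace Kt) : ℝ :=
  -(dotProduct ((GammaMat Kt κ σ).mulVec η) fun i => pd i u η)
    + ∑ i, ∑ j, (PiMat Kt κ σ * GammaMat Kt κ σ) i j * pd i (pd j u) η

/-- The Lebesgue adjoint `L_η* u = ∇·(Γη u) + ∑_{i,j} (ΓΠ)_{ij} ∂_i∂_j u`. -/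
def OUGenStar (Kt : ℕ) (κ σ : ℝ) (u : EtaSpace Kt → ℝ) (η : EtaSpace Kt) : ℝ :=
  (∑ i, pd i (fun ξ => ((GammaMat Kt κ σ).mulVec ξ) i * u ξ) η)
    + ∑ i, ∑ j, (GammaMat Kt κ σ * PiMat Kt κ σ) i j * pd i (pd j u) η

/-- The density `f(η) = ((2π)^{2K} det Π)^{-1/2} exp(-η·Π⁻¹η/2)` of `N(0,Π)`. -/
def gaussDens (Kt : ℕ) (κ σ : ℝ) (η : EtaSpace Kt) : ℝ :=
  ((2 * π) ^ (Fintype.card (ModeIdx Kt)) * (PiMat Kt κ σ).det) ^ (-(1 : ℝ) / 2) *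
    Real.exp (-(1 / 2) * dotProduct η ((PiMat Kt κ σ)⁻¹.mulVec η))

/-- The height function `h(x,η) = ∑_{0<|k|≤K̃} η^k e^{2πi k·x}` (real-valued under the
conjugation constraint, here realized as the real part), where the complex coefficient
`η^k` is reconstructed from the real vector `η` as `η(k,false) + i·η(k,true)`. -/
def hFun (Kt : ℕ) (η : EtaSpace Kt) (x : Fin 2 → ℝ) : ℝ :=
  (∑ k : {k : ℤ × ℤ // k ∈ modes Kt},
      ((η (k, false) : ℂ) + (η (k, true) : ℂ) * Complex.I) *
        Complex.exp (2 * (π : ℂ) * Complex.I *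
          ((k.1.1 : ℂ) * (x 0 : ℂ) + (k.1.2 : ℂ) * (x 1 : ℂ)))).re

/-- The gradient `∇_x h(x,η)`. -/
def gradH (Kt : ℕ) (η : EtaSpace Kt) (x : Fin 2 → ℝ) : Fin 2 → ℝ :=
  fun i => pd i (hFun Kt η) x

/-- The metric tensor `g(x,η) = I + ∇_x h ⊗ ∇_x h`. -/
def metricG (Kt : ℕ) (η : EtaSpace Kt) (x : Fin 2 → ℝ) : Matrix (Fin 2) (Fin 2) ℝ :=
  1 + Matrix.of fun i j => gradH Kt η x i * gradH Kt η x j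

/-- `Σ(x,η) = g(x,η)⁻¹`. -/
def SigMat (Kt : ℕ) (η : EtaSpace Kt) (x : Fin 2 → ℝ) : Matrix (Fin 2) (Fin 2) ℝ :=
  (metricG Kt η x)⁻¹

/-- `|g|(x,η) = det g(x,η)`. -/
def detG (Kt : ℕ) (η : EtaSpace Kt) (x : Fin 2 → ℝ) : ℝ := (metricG Kt η x).det

/-- The drift `F(x,η) = |g|^{-1/2} ∇_x·(|g|^{1/2} Σ)(x,η)`, divergence taken row-wise. -/
def Fdrift (Kt : ℕ) (η : EtaSpace Kt) (x : Fin 2 → ℝ) : Fin 2 → ℝ := fun i =>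
  (Real.sqrt (detG Kt η x))⁻¹ *
    ∑ j, pd j (fun y => Real.sqrt (detG Kt η y) * SigMat Kt η y i j) x

/-- A function on `ℝ²` that is `ℤ²`-periodic, i.e. a function on the torus `𝕋²`. -/
def ZPeriodic (u : (Fin 2 → ℝ) → ℝ) : Prop :=
  ∀ (x : Fin 2 → ℝ) (m : Fin 2 → ℤ), u (x + fun i => (m i : ℝ)) = u x

/-- The fundamental domain `[0,1]²` of the torus. -/
def unitBox : Set (Fin 2 → ℝ) := Set.Icc 0 1

/-- The generator `L_0(η) u = F·∇_y u + ∑_{i,j} Σ_{ij} ∂_{y_i}∂_{y_j} u`. -/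
def L0 (Kt : ℕ) (η : EtaSpace Kt) (u : (Fin 2 → ℝ) → ℝ) (y : Fin 2 → ℝ) : ℝ :=
  (∑ i, Fdrift Kt η y i * pd i u y) + ∑ i, ∑ j, SigMat Kt η y i j * pd i (pd j u) y

/-- The joint state space `𝕋² × ℝ^{2K}` (with `𝕋²` realized as `ℝ²` and periodicity). -/
abbrev PState (Kt : ℕ) := (Fin 2 → ℝ) × EtaSpace Kt

/-- Partial derivative in the `y`-variable of a function on `𝕋² × ℝ^{2K}`. -/
def pdY (Kt : ℕ) (i : Fin 2) (u : PState Kt → ℝ) (p : PState Kt) : ℝ :=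
  fderiv ℝ (fun y => u (y, p.2)) p.1 (Pi.single i 1)

/-- Partial derivative in the `η`-variable of a function on `𝕋² × ℝ^{2K}`. -/
def pdE (Kt : ℕ) (i : ModeIdx Kt) (u : PState Kt → ℝ) (p : PState Kt) : ℝ :=
  fderiv ℝ (fun η => u (p.1, η)) p.2 (Pi.single i 1)

/-- `L_0` acting on functions on `𝕋² × ℝ^{2K}` (in the `y`-variable). -/
def L0P (Kt : ℕ) (u : PState Kt → ℝ) (p : PState Kt) : ℝ :=
  (∑ i, Fdrift Kt p.2 p.1 i * pdY Kt i u p)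
    + ∑ i, ∑ j, SigMat Kt p.2 p.1 i j * pdY Kt i (pdY Kt j u) p

/-- The Lebesgue adjoint `L_0*(η) u = ∑_{i,j} ∂_{y_i}∂_{y_j}(Σ_{ij} u) − ∇_y·(F u)`. -/
def L0starP (Kt : ℕ) (u : PState Kt → ℝ) (p : PState Kt) : ℝ :=
  (∑ i, ∑ j, pdY Kt i (pdY Kt j fun q => SigMat Kt q.2 q.1 i j * u q) p)
    - ∑ i, pdY Kt i (fun q => Fdrift Kt q.2 q.1 i * u q) p

/-- `L_η` acting on functions on `𝕋² × ℝ^{2K}` (in the `η`-variable). -/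
def LEP (Kt : ℕ) (κ σ : ℝ) (u : PState Kt → ℝ) (p : PState Kt) : ℝ :=
  -(dotProduct ((GammaMat Kt κ σ).mulVec p.2) fun i => pdE Kt i u p)
    + ∑ i, ∑ j, (PiMat Kt κ σ * GammaMat Kt κ σ) i j * pdE Kt i (pdE Kt j u) p

/-- The Lebesgue adjoint `L_η*` acting on functions on `𝕋² × ℝ^{2K}`. -/
def LEstarP (Kt : ℕ) (κ σ : ℝ) (u : PState Kt → ℝ) (p : PState Kt) : ℝ :=
  (∑ i, pdE Kt i (fun q => ((GammaMat Kt κ σ).mulVec q.2) i * u q) p)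
    + ∑ i, ∑ j, (GammaMat Kt κ σ * PiMat Kt κ σ) i j * pdE Kt i (pdE Kt j u) p

/-- The full generator `G = L_0 + L_η`. -/
def GP (Kt : ℕ) (κ σ : ℝ) (u : PState Kt → ℝ) (p : PState Kt) : ℝ :=
  L0P Kt u p + LEP Kt κ σ u p

/-- The Lebesgue adjoint `G* = L_0* + L_η*`. -/
def GstarP (Kt : ℕ) (κ σ : ℝ) (u : PState Kt → ℝ) (p : PState Kt) : ℝ :=
  L0starP Kt u p + LEstarP Kt κ σ u p

/-! ### Auxiliary calculus lemmas for `pdY` and `pdE` -/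

section Aux
variable {Kt : ℕ}

lemma contDiff_sliceY {n : WithTop ℕ∞} {F : PState Kt → ℝ} (h : ContDiff ℝ n F)
    (η : EtaSpace Kt) : ContDiff ℝ n (fun y : Fin 2 → ℝ => F (y, η)) :=
  h.comp (contDiff_prodMk_left η)

lemma contDiff_sliceE {n : WithTop ℕ∞} {F : PState Kt → ℝ} (h : ContDiff ℝ n F)
    (y : Fin 2 → ℝ) : ContDiff ℝ n (fun η : EtaSpace Kt => F (y, η)) :=
  h.comp (contDiff_prodMk_right y)

lemma diffY {n : WithTop ℕ∞} {F : PState Kt → ℝ} (h : ContDiff ℝ n F) (hn : 1 ≤ n)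
    (p : PState Kt) : DifferentiableAt ℝ (fun y : Fin 2 → ℝ => F (y, p.2)) p.1 :=
  ((contDiff_sliceY h p.2).differentiable (by rintro rfl; exact absurd hn (not_le.mpr zero_lt_one))).differentiableAt

lemma diffE {n : WithTop ℕ∞} {F : PState Kt → ℝ} (h : ContDiff ℝ n F) (hn : 1 ≤ n)
    (p : PState Kt) : DifferentiableAt ℝ (fun η : EtaSpace Kt => F (p.1, η)) p.2 :=
  ((contDiff_sliceE h p.1).differentiable (by rintro rfl; exact absurd hn (not_le.mpr zero_lt_one))).differentiableAt

lemma contDiff_pdY {n m : WithTop ℕ∞} {F : PState Kt → ℝ} (h : ContDiff ℝ m F)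
    (hnm : n + 1 ≤ m) (i : Fin 2) : ContDiff ℝ n (fun p => pdY Kt i F p) := by
  have hL : ContDiff ℝ m (Function.uncurry fun (p : PState Kt) (y : Fin 2 → ℝ) => F (y, p.2)) := by
    exact h.comp ((ContinuousLinearMap.snd ℝ (PState Kt) (Fin 2 → ℝ)).prod
      ((ContinuousLinearMap.snd ℝ (Fin 2 → ℝ) (EtaSpace Kt)).comp
        (ContinuousLinearMap.fst ℝ (PState Kt) (Fin 2 → ℝ)))).contDiff
  exact hL.fderiv_apply contDiff_fst contDiff_const hnm

lemma contDiff_pdE {n m : WithTop ℕ∞} {F : PState Kt → ℝ} (h : ContDiff ℝ m F)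
    (hnm : n + 1 ≤ m) (i : ModeIdx Kt) : ContDiff ℝ n (fun p => pdE Kt i F p) := by
  have hL : ContDiff ℝ m (Function.uncurry fun (p : PState Kt) (η : EtaSpace Kt) => F (p.1, η)) := by
    exact h.comp ((ContinuousLinearMap.fst ℝ (Fin 2 → ℝ) (EtaSpace Kt)).comp
      (ContinuousLinearMap.fst ℝ (PState Kt) (EtaSpace Kt)) |>.prod
      (ContinuousLinearMap.snd ℝ (PState Kt) (EtaSpace Kt))).contDiff
  exact hL.fderiv_apply contDiff_snd contDiff_const hnm

lemma pdY_mul {f g : PState Kt → ℝ} {p : PState Kt} (i : Fin 2)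
    (hf : DifferentiableAt ℝ (fun y : Fin 2 → ℝ => f (y, p.2)) p.1)
    (hg : DifferentiableAt ℝ (fun y : Fin 2 → ℝ => g (y, p.2)) p.1) :
    pdY Kt i (fun q => f q * g q) p = pdY Kt i f p * g p + f p * pdY Kt i g p := by
  have h := fderiv_fun_mul hf hg
  simp only [pdY]
  rw [show (fun y : Fin 2 → ℝ => f (y, p.2) * g (y, p.2))
      = fun y => (fun q => f q * g q) (y, p.2) from rfl] at h
  rw [h]
  simp [smul_eq_mul]
  ring

lemma pdE_mul {f g : PState Kt → ℝ} {p : PState Kt} (i : ModeIdx Kt)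
    (hf : DifferentiableAt ℝ (fun η : EtaSpace Kt => f (p.1, η)) p.2)
    (hg : DifferentiableAt ℝ (fun η : EtaSpace Kt => g (p.1, η)) p.2) :
    pdE Kt i (fun q => f q * g q) p = pdE Kt i f p * g p + f p * pdE Kt i g p := by
  have h := fderiv_fun_mul hf hg
  simp only [pdE]
  rw [show (fun η : EtaSpace Kt => f (p.1, η) * g (p.1, η))
      = fun η => (fun q => f q * g q) (p.1, η) from rfl] at h
  rw [h]
  simp [smul_eq_mul]
  ring

end Aux
lemma contDiff_hFun (Kt : ℕ) :
    ContDiff ℝ (⊤ : ℕ∞) (fun p : PState Kt => hFun Kt p.2 p.1) := by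
  unfold hFun
  apply Complex.reCLM.contDiff.comp
  apply ContDiff.sum
  intro k _
  apply ContDiff.mul
  · apply ContDiff.add
    · exact Complex.ofRealCLM.contDiff.comp ((contDiff_apply ℝ ℝ (k, false)).comp contDiff_snd)
    · exact (Complex.ofRealCLM.contDiff.comp
        ((contDiff_apply ℝ ℝ (k, true)).comp contDiff_snd)).mul contDiff_const
  · apply Complex.contDiff_exp.comp
    apply ContDiff.mul contDiff_const
    apply ContDiff.add
    · exact contDiff_const.mul (Complex.ofRealCLM.contDiff.comp
        ((contDiff_apply ℝ ℝ 0).comp contDiff_fst))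
    · exact contDiff_const.mul (Complex.ofRealCLM.contDiff.comp
        ((contDiff_apply ℝ ℝ 1).comp contDiff_fst))

section Smooth
variable {Kt : ℕ}

lemma gradH_eq_pdY (η : EtaSpace Kt) (x : Fin 2 → ℝ) (i : Fin 2) :
    gradH Kt η x i = pdY Kt i (fun q => hFun Kt q.2 q.1) (x, η) := rfl

lemma contDiff_gradH (i : Fin 2) :
    ContDiff ℝ (⊤ : ℕ∞) (fun p : PState Kt => gradH Kt p.2 p.1 i) := by
  simp only [gradH_eq_pdY]
  exact contDiff_pdY (contDiff_hFun Kt) (by simp) i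

lemma metricG_apply (η : EtaSpace Kt) (x : Fin 2 → ℝ) (i j : Fin 2) :
    metricG Kt η x i j = (if i = j then 1 else 0) + gradH Kt η x i * gradH Kt η x j := by
  simp [metricG, Matrix.add_apply, Matrix.one_apply]

lemma detG_eq (η : EtaSpace Kt) (x : Fin 2 → ℝ) :
    detG Kt η x = 1 + gradH Kt η x 0 ^ 2 + gradH Kt η x 1 ^ 2 := by
  rw [detG, Matrix.det_fin_two]
  simp only [metricG_apply]
  norm_num
  ring

lemma one_le_detG (η : EtaSpace Kt) (x : Fin 2 → ℝ) : 1 ≤ detG Kt η x := by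
  rw [detG_eq]; nlinarith [sq_nonneg (gradH Kt η x 0), sq_nonneg (gradH Kt η x 1)]

lemma detG_pos (η : EtaSpace Kt) (x : Fin 2 → ℝ) : 0 < detG Kt η x :=
  lt_of_lt_of_le one_pos (one_le_detG η x)

lemma SigMat_apply (η : EtaSpace Kt) (x : Fin 2 → ℝ) (i j : Fin 2) :
    SigMat Kt η x i j = (detG Kt η x)⁻¹ *
      ((if i = j then 1 else 0) * (metricG Kt η x 0 0 + metricG Kt η x 1 1)
        - metricG Kt η x i j) := by
  simp only [detG]
  rw [SigMat, Matrix.inv_def, Ring.inverse_eq_inv']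
  rw [Matrix.smul_apply, smul_eq_mul]
  congr 1
  rw [Matrix.adjugate_fin_two]
  fin_cases i <;> fin_cases j <;> simp [Matrix.one_apply] <;> ring

lemma SigMat_symm (η : EtaSpace Kt) (x : Fin 2 → ℝ) (i j : Fin 2) :
    SigMat Kt η x i j = SigMat Kt η x j i := by
  rw [SigMat_apply, SigMat_apply]
  congr 1
  fin_cases i <;> fin_cases j <;> norm_num [metricG_apply] <;> ring

lemma contDiff_metricG (i j : Fin 2) :
    ContDiff ℝ (⊤ : ℕ∞) (fun p : PState Kt => metricG Kt p.2 p.1 i j) := by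
  simp only [metricG_apply]
  exact contDiff_const.add ((contDiff_gradH i).mul (contDiff_gradH j))

lemma contDiff_detG : ContDiff ℝ (⊤ : ℕ∞) (fun p : PState Kt => detG Kt p.2 p.1) := by
  simp only [detG_eq]
  exact (contDiff_const.add ((contDiff_gradH 0).pow 2)).add ((contDiff_gradH 1).pow 2)

lemma contDiff_SigMat (i j : Fin 2) :
    ContDiff ℝ (⊤ : ℕ∞) (fun p : PState Kt => SigMat Kt p.2 p.1 i j) := by
  simp only [SigMat_apply]
  refine ContDiff.mul (contDiff_detG.inv fun p => ?_) ?_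
  · exact ne_of_gt (detG_pos p.2 p.1)
  · exact (contDiff_const.mul ((contDiff_metricG 0 0).add (contDiff_metricG 1 1))).sub
      (contDiff_metricG i j)

lemma contDiff_sqrtDetG : ContDiff ℝ (⊤ : ℕ∞) (fun p : PState Kt => Real.sqrt (detG Kt p.2 p.1)) := by
  rw [contDiff_iff_contDiffAt]
  intro p
  exact (Real.contDiffAt_sqrt (ne_of_gt (detG_pos p.2 p.1))).comp p contDiff_detG.contDiffAt

lemma sqrtDetG_pos (η : EtaSpace Kt) (x : Fin 2 → ℝ) : 0 < Real.sqrt (detG Kt η x) :=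
  Real.sqrt_pos.2 (detG_pos η x)

lemma Fdrift_eq_pdY (η : EtaSpace Kt) (x : Fin 2 → ℝ) (i : Fin 2) :
    Fdrift Kt η x i = (Real.sqrt (detG Kt η x))⁻¹ *
      ∑ j, pdY Kt j (fun q => Real.sqrt (detG Kt q.2 q.1) * SigMat Kt q.2 q.1 i j) (x, η) := rfl

lemma contDiff_Fdrift (i : Fin 2) :
    ContDiff ℝ (⊤ : ℕ∞) (fun p : PState Kt => Fdrift Kt p.2 p.1 i) := by
  simp only [Fdrift_eq_pdY]
  refine ContDiff.mul (contDiff_sqrtDetG.inv fun p => ne_of_gt (sqrtDetG_pos p.2 p.1)) ?_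
  have : ∀ j : Fin 2, ContDiff ℝ (⊤ : ℕ∞) (fun p : PState Kt =>
      pdY Kt j (fun q => Real.sqrt (detG Kt q.2 q.1) * SigMat Kt q.2 q.1 i j) p) :=
    fun j => contDiff_pdY (contDiff_sqrtDetG.mul (contDiff_SigMat i j)) (by simp) j
  exact ContDiff.sum fun j _ => this j

end Smooth

/-! ### Periodicity -/

section Periodic
variable {Kt : ℕ}

lemma fderiv_shift (f : (Fin 2 → ℝ) → ℝ) (x c : Fin 2 → ℝ) :
    fderiv ℝ (fun y => f (y + c)) x = fderiv ℝ f (x + c) := by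
  by_cases h : DifferentiableAt ℝ f (x + c)
  · have h1 : HasFDerivAt (fun y : Fin 2 → ℝ => y + c)
        (ContinuousLinearMap.id ℝ (Fin 2 → ℝ)) x := (hasFDerivAt_id x).add_const c
    have h2 := h.hasFDerivAt.comp x h1
    simpa [Function.comp_def] using h2.fderiv
  · have h2 : ¬ DifferentiableAt ℝ (fun y => f (y + c)) x := by
      intro hd
      apply h
      have hd' : DifferentiableAt ℝ (fun y => f (y + c)) (x + c - c) := by
        rw [add_sub_cancel_right]; exact hd
      have h3 : DifferentiableAt ℝ ((fun y => f (y + c)) ∘ fun z : Fin 2 → ℝ => z - c) (x + c) :=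
        hd'.comp (x + c) (differentiableAt_id.sub_const c)
      simpa [Function.comp_def] using h3
    rw [fderiv_zero_of_not_differentiableAt h, fderiv_zero_of_not_differentiableAt h2]

lemma pd_periodic {f : (Fin 2 → ℝ) → ℝ} (hf : ZPeriodic f) (i : Fin 2) :
    ZPeriodic (pd i f) := by
  intro x m
  have : (fun y : Fin 2 → ℝ => f (y + fun j => (m j : ℝ))) = f := funext fun y => hf y m
  rw [pd, pd, ← fderiv_shift f x (fun j => (m j : ℝ)), this]

lemma ZPeriodic.mul {f g : (Fin 2 → ℝ) → ℝ} (hf : ZPeriodic f) (hg : ZPeriodic g) :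
    ZPeriodic (fun y => f y * g y) := fun x m => by simp [hf x m, hg x m]

lemma ZPeriodic.add {f g : (Fin 2 → ℝ) → ℝ} (hf : ZPeriodic f) (hg : ZPeriodic g) :
    ZPeriodic (fun y => f y + g y) := fun x m => by simp [hf x m, hg x m]

lemma ZPeriodic.sub {f g : (Fin 2 → ℝ) → ℝ} (hf : ZPeriodic f) (hg : ZPeriodic g) :
    ZPeriodic (fun y => f y - g y) := fun x m => by simp [hf x m, hg x m]

lemma ZPeriodic.sum {ι : Type*} (s : Finset ι) (f : ι → (Fin 2 → ℝ) → ℝ)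
    (hf : ∀ i ∈ s, ZPeriodic (f i)) : ZPeriodic (fun y => ∑ i ∈ s, f i y) := by
  intro x m
  exact Finset.sum_congr rfl fun i hi => hf i hi x m

lemma ZPeriodic.const (c : ℝ) : ZPeriodic (fun _ => c) := fun _ _ => rfl

lemma ZPeriodic.const_mul {f : (Fin 2 → ℝ) → ℝ} (c : ℝ) (hf : ZPeriodic f) :
    ZPeriodic (fun y => c * f y) := (ZPeriodic.const c).mul hf

lemma hFun_periodic (η : EtaSpace Kt) : ZPeriodic (hFun Kt η) := by
  intro x m
  unfold hFun
  congr 1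
  apply Finset.sum_congr rfl
  intro k _
  congr 1
  have : (2 * (π : ℂ) * Complex.I *
        ((k.1.1 : ℂ) * (((x + fun i => (m i : ℝ)) 0 : ℝ) : ℂ)
          + (k.1.2 : ℂ) * (((x + fun i => (m i : ℝ)) 1 : ℝ) : ℂ)))
      = 2 * (π : ℂ) * Complex.I * ((k.1.1 : ℂ) * ((x 0 : ℝ) : ℂ) + (k.1.2 : ℂ) * ((x 1 : ℝ) : ℂ))
        + ((k.1.1 * m 0 + k.1.2 * m 1 : ℤ) : ℂ) * (2 * (π : ℂ) * Complex.I) := by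
    simp only [Pi.add_apply]
    push_cast
    ring
  rw [this, Complex.exp_add, Complex.exp_int_mul_two_pi_mul_I, mul_one]

lemma gradH_periodic (η : EtaSpace Kt) (i : Fin 2) :
    ZPeriodic (fun y => gradH Kt η y i) := pd_periodic (hFun_periodic η) i

lemma metricG_periodic (η : EtaSpace Kt) (i j : Fin 2) :
    ZPeriodic (fun y => metricG Kt η y i j) := by
  intro x m
  have hg : ∀ i, gradH Kt η (x + fun j => (m j : ℝ)) i = gradH Kt η x i :=
    fun i => gradH_periodic η i x m
  simp only [metricG_apply, hg]

lemma detG_periodic (η : EtaSpace Kt) : ZPeriodic (fun y => detG Kt η y) := by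
  intro x m
  have hg : ∀ i, gradH Kt η (x + fun j => (m j : ℝ)) i = gradH Kt η x i :=
    fun i => gradH_periodic η i x m
  simp only [detG_eq, hg]

lemma SigMat_periodic (η : EtaSpace Kt) (i j : Fin 2) :
    ZPeriodic (fun y => SigMat Kt η y i j) := by
  intro x m
  have hd : detG Kt η (x + fun j => (m j : ℝ)) = detG Kt η x := detG_periodic η x m
  have hm : ∀ a b, metricG Kt η (x + fun j => (m j : ℝ)) a b = metricG Kt η x a b :=
    fun a b => metricG_periodic η a b x m
  simp only [SigMat_apply, hd, hm]

lemma Fdrift_periodic (η : EtaSpace Kt) (i : Fin 2) :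
    ZPeriodic (fun y => Fdrift Kt η y i) := by
  intro x m
  have hd : detG Kt η (x + fun j => (m j : ℝ)) = detG Kt η x := detG_periodic η x m
  simp only [Fdrift, hd]
  congr 1
  apply Finset.sum_congr rfl
  intro j _
  have hper : ZPeriodic (fun y => Real.sqrt (detG Kt η y) * SigMat Kt η y i j) := by
    intro z l
    have h1 : detG Kt η (z + fun a => (l a : ℝ)) = detG Kt η z := detG_periodic η z l
    have h2 : SigMat Kt η (z + fun a => (l a : ℝ)) i j = SigMat Kt η z i j :=
      SigMat_periodic η i j z l
    simp only [h1, h2]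
  exact pd_periodic hper j x m

end Periodic

/-! ### Vanishing integrals of derivatives -/

section IntZero
variable {Kt : ℕ}

lemma integral_pd_zero (i : Fin 2) (g : (Fin 2 → ℝ) → ℝ) (hd : Differentiable ℝ g)
    (hc : Continuous fun x => pd i g x) (hper : ZPeriodic g) :
    ∫ x in unitBox, pd i g x = 0 := by
  classical
  have hle : (0 : Fin 2 → ℝ) ≤ 1 := fun _ => zero_le_one
  have hfun_eq : (fun x : Fin 2 → ℝ =>
        ∑ j, (if j = i then fderiv ℝ g x else 0) (Pi.single j 1))
      = fun x => pd i g x := by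
    funext x
    rw [Finset.sum_eq_single i] <;> simp +contextual [pd]
  have key := MeasureTheory.integral_divergence_of_hasFDerivAt_off_countable'
    (0 : Fin 2 → ℝ) 1 hle (fun j => if j = i then g else 0)
    (fun j x => if j = i then fderiv ℝ g x else 0) ∅ Set.countable_empty
    (fun j => by
      split
      · exact hd.continuous.continuousOn
      · exact continuousOn_const)
    (fun x _ j => by
      split
      · exact (hd x).hasFDerivAt
      · exact hasFDerivAt_const 0 x)
    (by
      apply ContinuousOn.integrableOn_compact isCompact_Icc
      apply Continuous.continuousOn
      rw [hfun_eq]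
      exact hc)
  rw [hfun_eq] at key
  rw [show unitBox = Set.Icc (0 : Fin 2 → ℝ) 1 from rfl, key]
  apply Finset.sum_eq_zero
  intro j _
  rcases eq_or_ne j i with rfl | hj
  · rw [sub_eq_zero]
    have hins : ∀ x : Fin 1 → ℝ, Fin.insertNth j ((1 : Fin (1 + 1) → ℝ) j) x
        = Fin.insertNth j ((0 : Fin (1 + 1) → ℝ) j) x
          + fun l => (((if l = j then 1 else 0) : ℤ) : ℝ) := by
      intro x
      funext l
      rcases eq_or_ne l j with rfl | hl
      · simp
      · obtain ⟨t, rfl⟩ := Fin.exists_succAbove_eq hl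
        simp [Fin.insertNth_apply_succAbove, Fin.succAbove_ne j t]
    refine MeasureTheory.integral_congr_ae (Filter.Eventually.of_forall fun x => ?_)
    show (if j = j then g else 0) (Fin.insertNth j ((1 : Fin (1 + 1) → ℝ) j) x)
        = (if j = j then g else 0) (Fin.insertNth j ((0 : Fin (1 + 1) → ℝ) j) x)
    rw [if_pos rfl, hins x]
    exact hper _ _
  · simp [hj]

lemma integral_pdY_zero (Y : PState Kt → ℝ) (hY : ContDiff ℝ 1 Y)
    (hper : ∀ η, ZPeriodic fun y => Y (y, η)) (η : EtaSpace Kt) (i : Fin 2) :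
    ∫ x in unitBox, pdY Kt i Y (x, η) = 0 := by
  have hcont : Continuous (fun x => pdY Kt i Y (x, η)) :=
    (contDiff_zero.mp (contDiff_pdY hY (by norm_num) i)).comp
      (continuous_id.prodMk continuous_const)
  exact integral_pd_zero i (fun y => Y (y, η))
    ((contDiff_sliceY hY η).differentiable one_ne_zero) hcont (hper η)

lemma continuous_euclNorm : Continuous (euclNorm (ι := ModeIdx Kt)) :=
  Real.continuous_sqrt.comp (continuous_finset_sum _ fun i _ => (continuous_apply i).pow 2)

lemma pdE_vanish {f : PState Kt → ℝ} {R : ℝ} (h : ∀ p : PState Kt, R < euclNorm p.2 → f p = 0)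
    (p : PState Kt) (hp : R < euclNorm p.2) (i : ModeIdx Kt) : pdE Kt i f p = 0 := by
  unfold pdE
  have hopen : IsOpen {η : EtaSpace Kt | R < euclNorm η} :=
    isOpen_lt continuous_const continuous_euclNorm
  have hev : (fun η => f (p.1, η)) =ᶠ[nhds p.2] (fun _ => (0 : ℝ)) := by
    filter_upwards [hopen.mem_nhds hp] with η hη using h (p.1, η) hη
  rw [Filter.EventuallyEq.fderiv_eq hev]
  simp

lemma pdY_vanish {f : PState Kt → ℝ} {R : ℝ} (h : ∀ p : PState Kt, R < euclNorm p.2 → f p = 0)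
    (p : PState Kt) (hp : R < euclNorm p.2) (i : Fin 2) : pdY Kt i f p = 0 := by
  unfold pdY
  have hz : (fun y : Fin 2 → ℝ => f (y, p.2)) = fun _ => (0 : ℝ) :=
    funext fun y => h (y, p.2) hp
  rw [hz]
  simp

lemma isCompact_euclBall (R : ℝ) : IsCompact {η : EtaSpace Kt | euclNorm η ≤ R} := by
  have hcl : IsClosed {η : EtaSpace Kt | euclNorm η ≤ R} :=
    isClosed_le continuous_euclNorm continuous_const
  have hsub : {η : EtaSpace Kt | euclNorm η ≤ R} ⊆ Metric.closedBall 0 (max R 0) := by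
    intro η hη
    rw [Metric.mem_closedBall, dist_zero_right]
    rw [pi_norm_le_iff_of_nonneg (le_max_right R 0)]
    intro i
    have h1 : ‖η i‖ = Real.sqrt ((η i) ^ 2) := by
      rw [Real.sqrt_sq_eq_abs]; rfl
    have h2 : (η i) ^ 2 ≤ ∑ j, (η j) ^ 2 :=
      Finset.single_le_sum (fun j _ => sq_nonneg (η j)) (Finset.mem_univ i)
    have h3 : ‖η i‖ ≤ euclNorm η := by
      rw [h1, euclNorm]; exact Real.sqrt_le_sqrt h2
    exact le_max_of_le_left (h3.trans hη)
  exact (isCompact_closedBall (0 : EtaSpace Kt) (max R 0)).of_isClosed_subset hcl hsub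

lemma hasCompactSupport_of_vanish {g : EtaSpace Kt → ℝ} {R : ℝ}
    (h : ∀ η, R < euclNorm η → g η = 0) : HasCompactSupport g := by
  apply HasCompactSupport.intro (isCompact_euclBall R)
  intro η hη
  exact h η (not_le.mp hη)

lemma integral_pdE_zero (E : PState Kt → ℝ) (hE : ContDiff ℝ 1 E) (R : ℝ)
    (h : ∀ p : PState Kt, R < euclNorm p.2 → E p = 0) (y : Fin 2 → ℝ) (i : ModeIdx Kt) :
    ∫ η, pdE Kt i E (y, η) = 0 := by
  have hf : Differentiable ℝ (fun η => E (y, η)) := (contDiff_sliceE hE y).differentiable one_ne_zero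
  have hcont : Continuous (fun η => pdE Kt i E (y, η)) :=
    (contDiff_zero.mp (contDiff_pdE hE (by norm_num) i)).comp
      (continuous_const.prodMk continuous_id)
  have hsupp1 : HasCompactSupport (fun η => E (y, η)) :=
    hasCompactSupport_of_vanish (fun η hη => h (y, η) hη)
  have hsupp2 : HasCompactSupport (fun η => pdE Kt i E (y, η)) :=
    hasCompactSupport_of_vanish (fun η hη => pdE_vanish h (y, η) hη i)
  have hint1 : Integrable (fun η => E (y, η)) :=
    (hf.continuous).integrable_of_hasCompactSupport hsupp1
  have hint2 : Integrable (fun η => pdE Kt i E (y, η)) :=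
    hcont.integrable_of_hasCompactSupport hsupp2
  have key := integral_mul_fderiv_eq_neg_fderiv_mul_of_integrable
    (μ := (volume : Measure (EtaSpace Kt))) (f := fun η => E (y, η)) (g := fun _ => (1 : ℝ))
    (v := Pi.single i 1) (by simp only [mul_one]; exact hint2)
    (by simp) (by simpa using hint1)
    (fun x _ => hf x) (fun x _ => differentiableAt_const (1 : ℝ))
  simp only [fderiv_fun_const] at key
  simp only [Pi.zero_apply, ContinuousLinearMap.zero_apply, mul_zero, mul_one,
    integral_zero] at key
  have heq : ∫ η, pdE Kt i E (y, η)
      = ∫ x, (fderiv ℝ (fun η => E (y, η)) x) (Pi.single i 1) := rfl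
  rw [heq]
  linarith [key]

end IntZero

/-! ### Integrability and Fubini -/

section Integr
variable {Kt : ℕ}

lemma integrable_prod_of_vanish (g : PState Kt → ℝ) (hg : Continuous g) (R : ℝ)
    (h : ∀ p : PState Kt, R < euclNorm p.2 → g p = 0) :
    Integrable (Function.uncurry fun (η : EtaSpace Kt) (y : Fin 2 → ℝ) => g (y, η))
      ((volume : Measure (EtaSpace Kt)).prod (volume.restrict unitBox)) := by
  classical
  set S : Set (EtaSpace Kt) := {η | euclNorm η ≤ R} with hSdef
  have hS : IsCompact S := isCompact_euclBall R
  have hScl : IsClosed S := isClosed_le continuous_euclNorm continuous_const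
  have hF : Continuous (Function.uncurry fun (η : EtaSpace Kt) (y : Fin 2 → ℝ) => g (y, η)) :=
    hg.comp (continuous_snd.prodMk continuous_fst)
  obtain ⟨C, hC⟩ := (hS.prod (isCompact_Icc (a := (0 : Fin 2 → ℝ)) (b := 1))).exists_bound_of_continuousOn hF.continuousOn
  set C' := max C 0 with hC'def
  have hmeas : MeasurableSet (S ×ˢ (Set.univ : Set (Fin 2 → ℝ))) :=
    (hScl.measurableSet).prod MeasurableSet.univ
  have hfin : ((volume : Measure (EtaSpace Kt)).prod (volume.restrict unitBox))
      (S ×ˢ (Set.univ : Set (Fin 2 → ℝ))) < ⊤ := by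
    rw [Measure.prod_prod]
    apply ENNReal.mul_lt_top hS.measure_lt_top
    calc (volume.restrict unitBox) Set.univ = volume unitBox := by
          rw [Measure.restrict_apply MeasurableSet.univ, Set.univ_inter]
      _ < ⊤ := (isCompact_Icc).measure_lt_top
  refine Integrable.mono'
    (g := (S ×ˢ (Set.univ : Set (Fin 2 → ℝ))).indicator (fun _ => C')) ?_ ?_ ?_
  · exact (integrable_indicator_iff hmeas).2 (integrableOn_const hfin.ne)
  · exact hF.aestronglyMeasurable
  · have hae : ∀ᵐ q ∂((volume : Measure (EtaSpace Kt)).prod (volume.restrict unitBox)),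
        q.2 ∈ unitBox := by
      rw [MeasureTheory.ae_iff]
      have : {q : EtaSpace Kt × (Fin 2 → ℝ) | ¬ q.2 ∈ unitBox}
          = (Set.univ : Set (EtaSpace Kt)) ×ˢ unitBoxᶜ := by
        ext q; simp [Set.mem_prod]
      rw [this, Measure.prod_prod]
      have h2 : (volume.restrict unitBox) unitBoxᶜ = 0 := by
        rw [Measure.restrict_apply
          (show MeasurableSet unitBoxᶜ from
            (isClosed_Icc (a := (0 : Fin 2 → ℝ)) (b := 1)).measurableSet.compl)]
        rw [Set.compl_inter_self]
        simp
      rw [h2]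
      simp
    filter_upwards [hae] with q hq
    by_cases hqS : q.1 ∈ S
    · rw [Set.indicator_of_mem (by exact ⟨hqS, Set.mem_univ _⟩)]
      exact le_trans (hC q ⟨hqS, hq⟩) (le_max_left C 0)
    · have : g (q.2, q.1) = 0 := h (q.2, q.1) (not_le.mp hqS)
      rw [show Function.uncurry (fun (η : EtaSpace Kt) (y : Fin 2 → ℝ) => g (y, η)) q
        = g (q.2, q.1) from rfl, this]
      simp only [norm_zero]
      exact Set.indicator_nonneg (fun _ _ => le_max_right C 0) q

lemma swap_integral_of_vanish (g : PState Kt → ℝ) (hg : Continuous g) (R : ℝ)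
    (h : ∀ p : PState Kt, R < euclNorm p.2 → g p = 0) :
    ∫ η : EtaSpace Kt, ∫ y in unitBox, g (y, η)
      = ∫ y in unitBox, ∫ η : EtaSpace Kt, g (y, η) :=
  MeasureTheory.integral_integral_swap (integrable_prod_of_vanish g hg R h)

lemma integrable_inner_of_vanish (g : PState Kt → ℝ) (hg : Continuous g) (R : ℝ)
    (h : ∀ p : PState Kt, R < euclNorm p.2 → g p = 0) :
    Integrable (fun η : EtaSpace Kt => ∫ y in unitBox, g (y, η)) :=
  (integrable_prod_of_vanish g hg R h).integral_prod_left

end Integr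

section Aux2
variable {Kt : ℕ}

lemma pdY_add {f g : PState Kt → ℝ} {p : PState Kt} (i : Fin 2)
    (hf : DifferentiableAt ℝ (fun y : Fin 2 → ℝ => f (y, p.2)) p.1)
    (hg : DifferentiableAt ℝ (fun y : Fin 2 → ℝ => g (y, p.2)) p.1) :
    pdY Kt i (fun q => f q + g q) p = pdY Kt i f p + pdY Kt i g p := by
  have h := fderiv_fun_add hf hg
  simp only [pdY]
  rw [show (fun y : Fin 2 → ℝ => f (y, p.2) + g (y, p.2))
      = fun y => (fun q => f q + g q) (y, p.2) from rfl] at h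
  rw [h]
  simp

lemma pdY_sub {f g : PState Kt → ℝ} {p : PState Kt} (i : Fin 2)
    (hf : DifferentiableAt ℝ (fun y : Fin 2 → ℝ => f (y, p.2)) p.1)
    (hg : DifferentiableAt ℝ (fun y : Fin 2 → ℝ => g (y, p.2)) p.1) :
    pdY Kt i (fun q => f q - g q) p = pdY Kt i f p - pdY Kt i g p := by
  have h := fderiv_fun_sub hf hg
  simp only [pdY]
  rw [show (fun y : Fin 2 → ℝ => f (y, p.2) - g (y, p.2))
      = fun y => (fun q => f q - g q) (y, p.2) from rfl] at h
  rw [h]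
  simp

lemma pdE_add {f g : PState Kt → ℝ} {p : PState Kt} (i : ModeIdx Kt)
    (hf : DifferentiableAt ℝ (fun η : EtaSpace Kt => f (p.1, η)) p.2)
    (hg : DifferentiableAt ℝ (fun η : EtaSpace Kt => g (p.1, η)) p.2) :
    pdE Kt i (fun q => f q + g q) p = pdE Kt i f p + pdE Kt i g p := by
  have h := fderiv_fun_add hf hg
  simp only [pdE]
  rw [show (fun η : EtaSpace Kt => f (p.1, η) + g (p.1, η))
      = fun η => (fun q => f q + g q) (p.1, η) from rfl] at h
  rw [h]
  simp

lemma pdE_sub {f g : PState Kt → ℝ} {p : PState Kt} (i : ModeIdx Kt)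
    (hf : DifferentiableAt ℝ (fun η : EtaSpace Kt => f (p.1, η)) p.2)
    (hg : DifferentiableAt ℝ (fun η : EtaSpace Kt => g (p.1, η)) p.2) :
    pdE Kt i (fun q => f q - g q) p = pdE Kt i f p - pdE Kt i g p := by
  have h := fderiv_fun_sub hf hg
  simp only [pdE]
  rw [show (fun η : EtaSpace Kt => f (p.1, η) - g (p.1, η))
      = fun η => (fun q => f q - g q) (p.1, η) from rfl] at h
  rw [h]
  simp

lemma pdE_const_mul {f : PState Kt → ℝ} {p : PState Kt} (c : ℝ) (i : ModeIdx Kt)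
    (hf : DifferentiableAt ℝ (fun η : EtaSpace Kt => f (p.1, η)) p.2) :
    pdE Kt i (fun q => c * f q) p = c * pdE Kt i f p := by
  have h := fderiv_const_mul hf c
  simp only [pdE]
  rw [show (fun η : EtaSpace Kt => c * f (p.1, η))
      = fun η => (fun q => c * f q) (p.1, η) from rfl] at h
  rw [h]
  simp

end Aux2

/-! ### Pointwise decomposition: η-part -/

def Efun (Kt : ℕ) (κ σ : ℝ) (ρ u v : PState Kt → ℝ) (i : ModeIdx Kt) : PState Kt → ℝ :=
  fun q => (PiMat Kt κ σ * GammaMat Kt κ σ) i i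
      * (ρ q * pdE Kt i (fun r => u r * v r) q - (u q * v q) * pdE Kt i ρ q)
    - ((GammaMat Kt κ σ).mulVec q.2 i * ρ q) * (u q * v q)

section PW
variable {Kt : ℕ} {κ σ : ℝ} {ρ u v : PState Kt → ℝ}

lemma PG_offdiag (κ σ : ℝ) {i j : ModeIdx Kt} (h : i ≠ j) :
    (PiMat Kt κ σ * GammaMat Kt κ σ) i j = 0 := by
  rw [PiMat, GammaMat, Matrix.diagonal_mul_diagonal]
  exact Matrix.diagonal_apply_ne _ h

lemma GP_offdiag (κ σ : ℝ) {i j : ModeIdx Kt} (h : i ≠ j) :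
    (GammaMat Kt κ σ * PiMat Kt κ σ) i j = 0 := by
  rw [PiMat, GammaMat, Matrix.diagonal_mul_diagonal]
  exact Matrix.diagonal_apply_ne _ h

lemma GP_diag_eq (κ σ : ℝ) (i : ModeIdx Kt) :
    (GammaMat Kt κ σ * PiMat Kt κ σ) i i = (PiMat Kt κ σ * GammaMat Kt κ σ) i i := by
  rw [PiMat, GammaMat, Matrix.diagonal_mul_diagonal, Matrix.diagonal_mul_diagonal]
  rw [Matrix.diagonal_apply_eq, Matrix.diagonal_apply_eq]
  ring

lemma contDiff_mulVecGamma (κ σ : ℝ) (i : ModeIdx Kt) :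
    ContDiff ℝ (⊤ : ℕ∞) (fun q : PState Kt => (GammaMat Kt κ σ).mulVec q.2 i) := by
  have : (fun q : PState Kt => (GammaMat Kt κ σ).mulVec q.2 i)
      = fun q => GammaVal κ σ i.1.1 * q.2 i := by
    funext q
    rw [GammaMat, Matrix.mulVec_diagonal]
  rw [this]
  exact contDiff_const.mul ((contDiff_apply ℝ ℝ i).comp contDiff_snd)

lemma collapse_sum (b : Matrix (ModeIdx Kt) (ModeIdx Kt) ℝ)
    (hb : ∀ i j, i ≠ j → b i j = 0) (f : ModeIdx Kt → ModeIdx Kt → ℝ) :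
    ∑ i, ∑ j, b i j * f i j = ∑ i, b i i * f i i := by
  apply Finset.sum_congr rfl
  intro i _
  apply Finset.sum_eq_single i
  · intro j _ hj
    rw [hb i j (Ne.symm hj)]
    ring
  · intro h
    exact absurd (Finset.mem_univ i) h

set_option maxHeartbeats 2000000 in
lemma Epart (hC2 : ContDiff ℝ 2 ρ) (hu : ContDiff ℝ (⊤ : ℕ∞) u) (hv : ContDiff ℝ (⊤ : ℕ∞) v)
    (p : PState Kt) :
    ∑ i, pdE Kt i (Efun Kt κ σ ρ u v i) p
      = (LEP Kt κ σ u p * v p + u p * LEP Kt κ σ v p) * ρ p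
        + 2 * (∑ i, pdE Kt i u p *
            ∑ j, (PiMat Kt κ σ * GammaMat Kt κ σ) i j * pdE Kt j v p) * ρ p
        - (u p * v p) * LEstarP Kt κ σ ρ p := by
  classical
  have cu : ContDiff ℝ 1 u := hu.of_le (by simp)
  have cv : ContDiff ℝ 1 v := hv.of_le (by simp)
  have cρ : ContDiff ℝ 1 ρ := hC2.of_le (by exact_mod_cast one_le_two)
  have cw : ContDiff ℝ 1 (fun q => u q * v q) := cu.mul cv
  have cpdEu : ∀ i, ContDiff ℝ 1 (fun q => pdE Kt i u q) :=
    fun i => (contDiff_pdE (n := ((⊤ : ℕ∞) : WithTop ℕ∞)) hu (by simp) i).of_le (by simp)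
  have cpdEv : ∀ i, ContDiff ℝ 1 (fun q => pdE Kt i v q) :=
    fun i => (contDiff_pdE (n := ((⊤ : ℕ∞) : WithTop ℕ∞)) hv (by simp) i).of_le (by simp)
  have cpdEρ : ∀ i, ContDiff ℝ 1 (fun q => pdE Kt i ρ q) :=
    fun i => contDiff_pdE hC2 (by norm_num) i
  have cpdEw : ∀ i, ContDiff ℝ 1 (fun q => pdE Kt i (fun r => u r * v r) q) :=
    fun i => (contDiff_pdE (n := ((⊤ : ℕ∞) : WithTop ℕ∞)) (hu.mul hv) (by exact_mod_cast le_top) i).of_le (by simp)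
  have cgam : ∀ i, ContDiff ℝ 1 (fun q : PState Kt => (GammaMat Kt κ σ).mulVec q.2 i) :=
    fun i => (contDiff_mulVecGamma κ σ i).of_le (by simp)
  -- expansion of pdE of the product u * v, as functions
  have hwfun : ∀ i, (fun q => pdE Kt i (fun r => u r * v r) q)
      = fun q => pdE Kt i u q * v q + u q * pdE Kt i v q := by
    intro i
    funext q
    exact pdE_mul i (diffE cu le_rfl q) (diffE cv le_rfl q)
  -- second derivative of w
  have h2w : ∀ i, pdE Kt i (pdE Kt i (fun r => u r * v r)) p
      = pdE Kt i (pdE Kt i u) p * v p + pdE Kt i u p * pdE Kt i v p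
        + (pdE Kt i u p * pdE Kt i v p + u p * pdE Kt i (pdE Kt i v) p) := by
    intro i
    rw [show pdE Kt i (fun r => u r * v r) = fun q => pdE Kt i u q * v q + u q * pdE Kt i v q
      from hwfun i]
    rw [pdE_add i (diffE ((cpdEu i).mul cv) le_rfl p) (diffE (cu.mul (cpdEv i)) le_rfl p),
      pdE_mul i (diffE (cpdEu i) le_rfl p) (diffE cv le_rfl p),
      pdE_mul i (diffE cu le_rfl p) (diffE (cpdEv i) le_rfl p)]
  -- expansion of pdE of Efun
  have hwp : ∀ i, pdE Kt i (fun r => u r * v r) p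
      = pdE Kt i u p * v p + u p * pdE Kt i v p := by
    intro i
    exact congrFun (hwfun i) p
  have hE : ∀ i, pdE Kt i (Efun Kt κ σ ρ u v i) p
      = (PiMat Kt κ σ * GammaMat Kt κ σ) i i
          * (ρ p * pdE Kt i (pdE Kt i (fun r => u r * v r)) p
            - (u p * v p) * pdE Kt i (pdE Kt i ρ) p)
        - (pdE Kt i (fun q => (GammaMat Kt κ σ).mulVec q.2 i * ρ q) p * (u p * v p)
            + ((GammaMat Kt κ σ).mulVec p.2 i * ρ p)
              * (pdE Kt i u p * v p + u p * pdE Kt i v p)) := by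
    intro i
    have cF1 : ContDiff ℝ 1 (fun q => ρ q * pdE Kt i (fun r => u r * v r) q) :=
      cρ.mul (cpdEw i)
    have cF2 : ContDiff ℝ 1 (fun q => (u q * v q) * pdE Kt i ρ q) := cw.mul (cpdEρ i)
    have cF3 : ContDiff ℝ 1 (fun q : PState Kt => (GammaMat Kt κ σ).mulVec q.2 i * ρ q) :=
      (cgam i).mul cρ
    have s1 : pdE Kt i (Efun Kt κ σ ρ u v i) p
        = pdE Kt i (fun q => (PiMat Kt κ σ * GammaMat Kt κ σ) i i
            * (ρ q * pdE Kt i (fun r => u r * v r) q - (u q * v q) * pdE Kt i ρ q)) p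
          - pdE Kt i (fun q =>
              ((GammaMat Kt κ σ).mulVec q.2 i * ρ q) * (u q * v q)) p :=
      pdE_sub
        (f := fun q => (PiMat Kt κ σ * GammaMat Kt κ σ) i i
          * (ρ q * pdE Kt i (fun r => u r * v r) q - (u q * v q) * pdE Kt i ρ q))
        (g := fun q => ((GammaMat Kt κ σ).mulVec q.2 i * ρ q) * (u q * v q)) i
        (diffE (contDiff_const.mul (cF1.sub cF2)) le_rfl p)
        (diffE (cF3.mul cw) le_rfl p)
    have s2 : pdE Kt i (fun q => (PiMat Kt κ σ * GammaMat Kt κ σ) i i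
        * (ρ q * pdE Kt i (fun r => u r * v r) q - (u q * v q) * pdE Kt i ρ q)) p
        = (PiMat Kt κ σ * GammaMat Kt κ σ) i i
          * pdE Kt i (fun q =>
              ρ q * pdE Kt i (fun r => u r * v r) q - (u q * v q) * pdE Kt i ρ q) p :=
      pdE_const_mul
        (f := fun q => ρ q * pdE Kt i (fun r => u r * v r) q - (u q * v q) * pdE Kt i ρ q)
        _ i (diffE (cF1.sub cF2) le_rfl p)
    have s3 : pdE Kt i (fun q =>
        ρ q * pdE Kt i (fun r => u r * v r) q - (u q * v q) * pdE Kt i ρ q) p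
        = pdE Kt i (fun q => ρ q * pdE Kt i (fun r => u r * v r) q) p
          - pdE Kt i (fun q => (u q * v q) * pdE Kt i ρ q) p :=
      pdE_sub (f := fun q => ρ q * pdE Kt i (fun r => u r * v r) q)
        (g := fun q => (u q * v q) * pdE Kt i ρ q) i
        (diffE cF1 le_rfl p) (diffE cF2 le_rfl p)
    have s4 : pdE Kt i (fun q => ρ q * pdE Kt i (fun r => u r * v r) q) p
        = pdE Kt i ρ p * pdE Kt i (fun r => u r * v r) p
          + ρ p * pdE Kt i (pdE Kt i (fun r => u r * v r)) p :=
      pdE_mul (f := ρ) (g := pdE Kt i (fun r => u r * v r)) i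
        (diffE cρ le_rfl p) (diffE (cpdEw i) le_rfl p)
    have s5 : pdE Kt i (fun q => (u q * v q) * pdE Kt i ρ q) p
        = pdE Kt i (fun r => u r * v r) p * pdE Kt i ρ p
          + (u p * v p) * pdE Kt i (pdE Kt i ρ) p :=
      pdE_mul (f := fun r => u r * v r) (g := pdE Kt i ρ) i
        (diffE cw le_rfl p) (diffE (cpdEρ i) le_rfl p)
    have s6 : pdE Kt i (fun q =>
        ((GammaMat Kt κ σ).mulVec q.2 i * ρ q) * (u q * v q)) p
        = pdE Kt i (fun q => (GammaMat Kt κ σ).mulVec q.2 i * ρ q) p * (u p * v p)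
          + ((GammaMat Kt κ σ).mulVec p.2 i * ρ p) * pdE Kt i (fun r => u r * v r) p :=
      pdE_mul (f := fun q : PState Kt => (GammaMat Kt κ σ).mulVec q.2 i * ρ q)
        (g := fun r => u r * v r) i (diffE cF3 le_rfl p) (diffE cw le_rfl p)
    rw [s1, s2, s3, s4, s5, s6, hwp i]
    ring
  -- collapse the double sums in LEP/LEstarP and the right-hand side
  have hLEPu : LEP Kt κ σ u p = -(∑ i, (GammaMat Kt κ σ).mulVec p.2 i * pdE Kt i u p)
      + ∑ i, (PiMat Kt κ σ * GammaMat Kt κ σ) i i * pdE Kt i (pdE Kt i u) p := by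
    rw [LEP, dotProduct, collapse_sum (PiMat Kt κ σ * GammaMat Kt κ σ)
      (fun i j h => PG_offdiag κ σ h) (fun i j => pdE Kt i (pdE Kt j u) p)]
  have hLEPv : LEP Kt κ σ v p = -(∑ i, (GammaMat Kt κ σ).mulVec p.2 i * pdE Kt i v p)
      + ∑ i, (PiMat Kt κ σ * GammaMat Kt κ σ) i i * pdE Kt i (pdE Kt i v) p := by
    rw [LEP, dotProduct, collapse_sum (PiMat Kt κ σ * GammaMat Kt κ σ)
      (fun i j h => PG_offdiag κ σ h) (fun i j => pdE Kt i (pdE Kt j v) p)]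
  have hLEs : LEstarP Kt κ σ ρ p
      = (∑ i, pdE Kt i (fun q => (GammaMat Kt κ σ).mulVec q.2 i * ρ q) p)
        + ∑ i, (PiMat Kt κ σ * GammaMat Kt κ σ) i i * pdE Kt i (pdE Kt i ρ) p := by
    rw [LEstarP, collapse_sum (GammaMat Kt κ σ * PiMat Kt κ σ)
      (fun i j h => GP_offdiag κ σ h) (fun i j => pdE Kt i (pdE Kt j ρ) p)]
    congr 1
    apply Finset.sum_congr rfl
    intro i _
    rw [GP_diag_eq]
  have hRHS2 : (∑ i, pdE Kt i u p *
      ∑ j, (PiMat Kt κ σ * GammaMat Kt κ σ) i j * pdE Kt j v p)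
      = ∑ i, pdE Kt i u p * ((PiMat Kt κ σ * GammaMat Kt κ σ) i i * pdE Kt i v p) := by
    apply Finset.sum_congr rfl
    intro i _
    congr 1
    apply Finset.sum_eq_single i
    · intro j _ hj
      rw [PG_offdiag κ σ (Ne.symm hj)]
      ring
    · intro h
      exact absurd (Finset.mem_univ i) h
  have hφ : ∀ i, pdE Kt i (Efun Kt κ σ ρ u v i) p
      = v p * ρ p * ((PiMat Kt κ σ * GammaMat Kt κ σ) i i * pdE Kt i (pdE Kt i u) p)
        + u p * ρ p * ((PiMat Kt κ σ * GammaMat Kt κ σ) i i * pdE Kt i (pdE Kt i v) p)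
        + 2 * ρ p * (pdE Kt i u p * ((PiMat Kt κ σ * GammaMat Kt κ σ) i i * pdE Kt i v p))
        - v p * ρ p * ((GammaMat Kt κ σ).mulVec p.2 i * pdE Kt i u p)
        - u p * ρ p * ((GammaMat Kt κ σ).mulVec p.2 i * pdE Kt i v p)
        - (u p * v p) * pdE Kt i (fun q => (GammaMat Kt κ σ).mulVec q.2 i * ρ q) p
        - (u p * v p)
            * ((PiMat Kt κ σ * GammaMat Kt κ σ) i i * pdE Kt i (pdE Kt i ρ) p) := by
    intro i
    rw [hE i, h2w i]
    ring
  calc ∑ i, pdE Kt i (Efun Kt κ σ ρ u v i) p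
      = ∑ i, (v p * ρ p * ((PiMat Kt κ σ * GammaMat Kt κ σ) i i * pdE Kt i (pdE Kt i u) p)
        + u p * ρ p * ((PiMat Kt κ σ * GammaMat Kt κ σ) i i * pdE Kt i (pdE Kt i v) p)
        + 2 * ρ p * (pdE Kt i u p * ((PiMat Kt κ σ * GammaMat Kt κ σ) i i * pdE Kt i v p))
        - v p * ρ p * ((GammaMat Kt κ σ).mulVec p.2 i * pdE Kt i u p)
        - u p * ρ p * ((GammaMat Kt κ σ).mulVec p.2 i * pdE Kt i v p)
        - (u p * v p) * pdE Kt i (fun q => (GammaMat Kt κ σ).mulVec q.2 i * ρ q) p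
        - (u p * v p)
            * ((PiMat Kt κ σ * GammaMat Kt κ σ) i i * pdE Kt i (pdE Kt i ρ) p)) :=
        Finset.sum_congr rfl fun i _ => hφ i
    _ = (LEP Kt κ σ u p * v p + u p * LEP Kt κ σ v p) * ρ p
        + 2 * (∑ i, pdE Kt i u p *
            ∑ j, (PiMat Kt κ σ * GammaMat Kt κ σ) i j * pdE Kt j v p) * ρ p
        - (u p * v p) * LEstarP Kt κ σ ρ p := by
        rw [hLEPu, hLEPv, hLEs, hRHS2]
        simp only [Finset.sum_add_distrib, Finset.sum_sub_distrib, ← Finset.mul_sum]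
        ring

end PW

/-! ### Pointwise decomposition: y-part -/

def Yfun (Kt : ℕ) (ρ u v : PState Kt → ℝ) (i : Fin 2) : PState Kt → ℝ :=
  fun q => ∑ j, (SigMat Kt q.2 q.1 i j * ρ q * pdY Kt j (fun r => u r * v r) q
      - (u q * v q) * pdY Kt j (fun r => SigMat Kt r.2 r.1 i j * ρ r) q)
    + (Fdrift Kt q.2 q.1 i * ρ q) * (u q * v q)

section PWY
variable {Kt : ℕ} {ρ u v : PState Kt → ℝ}

set_option maxHeartbeats 4000000 in
lemma Ypart (hC2 : ContDiff ℝ 2 ρ) (hu : ContDiff ℝ (⊤ : ℕ∞) u) (hv : ContDiff ℝ (⊤ : ℕ∞) v)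
    (p : PState Kt) :
    ∑ i, pdY Kt i (Yfun Kt ρ u v i) p
      = (L0P Kt u p * v p + u p * L0P Kt v p) * ρ p
        + 2 * (∑ i, pdY Kt i u p * ∑ j, SigMat Kt p.2 p.1 i j * pdY Kt j v p) * ρ p
        - (u p * v p) * L0starP Kt ρ p := by
  classical
  have cu : ContDiff ℝ 1 u := hu.of_le (by simp)
  have cv : ContDiff ℝ 1 v := hv.of_le (by simp)
  have cρ : ContDiff ℝ 1 ρ := hC2.of_le (by exact_mod_cast one_le_two)
  have cw : ContDiff ℝ 1 (fun q => u q * v q) := cu.mul cv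
  have cA : ∀ i j : Fin 2, ContDiff ℝ 2 (fun r : PState Kt => SigMat Kt r.2 r.1 i j * ρ r) :=
    fun i j => ((contDiff_SigMat i j).of_le (WithTop.coe_le_coe.mpr le_top)).mul hC2
  have cA1 : ∀ i j : Fin 2, ContDiff ℝ 1 (fun r : PState Kt => SigMat Kt r.2 r.1 i j * ρ r) :=
    fun i j => (cA i j).of_le (by exact_mod_cast one_le_two)
  have cpdYA : ∀ i j k : Fin 2,
      ContDiff ℝ 1 (fun q => pdY Kt k (fun r => SigMat Kt r.2 r.1 i j * ρ r) q) :=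
    fun i j k => contDiff_pdY (cA i j) (by norm_num) k
  have cpdYu : ∀ j, ContDiff ℝ 1 (fun q => pdY Kt j u q) :=
    fun j => (contDiff_pdY (n := ((⊤ : ℕ∞) : WithTop ℕ∞)) hu (by simp) j).of_le (by simp)
  have cpdYv : ∀ j, ContDiff ℝ 1 (fun q => pdY Kt j v q) :=
    fun j => (contDiff_pdY (n := ((⊤ : ℕ∞) : WithTop ℕ∞)) hv (by simp) j).of_le (by simp)
  have cpdYw : ∀ j, ContDiff ℝ 1 (fun q => pdY Kt j (fun r => u r * v r) q) :=
    fun j => (contDiff_pdY (n := ((⊤ : ℕ∞) : WithTop ℕ∞)) (hu.mul hv) (by simp) j).of_le (by simp)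
  have cF : ∀ i, ContDiff ℝ 1 (fun q : PState Kt => Fdrift Kt q.2 q.1 i * ρ q) :=
    fun i => ((contDiff_Fdrift i).of_le (by simp)).mul cρ
  -- first derivative of the product
  have hwfun : ∀ j, (fun q => pdY Kt j (fun r => u r * v r) q)
      = fun q => pdY Kt j u q * v q + u q * pdY Kt j v q := by
    intro j
    funext q
    exact pdY_mul j (diffY cu le_rfl q) (diffY cv le_rfl q)
  have hwp : ∀ j, pdY Kt j (fun r => u r * v r) p
      = pdY Kt j u p * v p + u p * pdY Kt j v p := fun j => congrFun (hwfun j) p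
  -- second derivative of the product
  have h2w : ∀ i j, pdY Kt i (pdY Kt j (fun r => u r * v r)) p
      = pdY Kt i (pdY Kt j u) p * v p + pdY Kt j u p * pdY Kt i v p
        + (pdY Kt i u p * pdY Kt j v p + u p * pdY Kt i (pdY Kt j v) p) := by
    intro i j
    rw [show pdY Kt j (fun r => u r * v r)
        = fun q => pdY Kt j u q * v q + u q * pdY Kt j v q from hwfun j]
    rw [pdY_add (f := fun q => pdY Kt j u q * v q) (g := fun q => u q * pdY Kt j v q) i
        (diffY ((cpdYu j).mul cv) le_rfl p) (diffY (cu.mul (cpdYv j)) le_rfl p),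
      pdY_mul (f := fun q => pdY Kt j u q) (g := v) i
        (diffY (cpdYu j) le_rfl p) (diffY cv le_rfl p),
      pdY_mul (f := u) (g := fun q => pdY Kt j v q) i
        (diffY cu le_rfl p) (diffY (cpdYv j) le_rfl p)]
  -- expansion of pdY of each summand
  have hg : ∀ i j, pdY Kt i (fun q =>
        SigMat Kt q.2 q.1 i j * ρ q * pdY Kt j (fun r => u r * v r) q
          - (u q * v q) * pdY Kt j (fun r => SigMat Kt r.2 r.1 i j * ρ r) q) p
      = pdY Kt i (fun r => SigMat Kt r.2 r.1 i j * ρ r) p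
            * pdY Kt j (fun r => u r * v r) p
          + SigMat Kt p.2 p.1 i j * ρ p * pdY Kt i (pdY Kt j (fun r => u r * v r)) p
        - (pdY Kt i (fun r => u r * v r) p
              * pdY Kt j (fun r => SigMat Kt r.2 r.1 i j * ρ r) p
            + (u p * v p)
              * pdY Kt i (pdY Kt j (fun r => SigMat Kt r.2 r.1 i j * ρ r)) p) := by
    intro i j
    rw [pdY_sub
        (f := fun q => SigMat Kt q.2 q.1 i j * ρ q * pdY Kt j (fun r => u r * v r) q)
        (g := fun q => (u q * v q) * pdY Kt j (fun r => SigMat Kt r.2 r.1 i j * ρ r) q) i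
        (diffY ((cA1 i j).mul (cpdYw j)) le_rfl p)
        (diffY (cw.mul (cpdYA i j j)) le_rfl p),
      pdY_mul (f := fun r : PState Kt => SigMat Kt r.2 r.1 i j * ρ r)
        (g := fun q => pdY Kt j (fun r => u r * v r) q) i
        (diffY (cA1 i j) le_rfl p) (diffY (cpdYw j) le_rfl p),
      pdY_mul (f := fun r => u r * v r)
        (g := fun q => pdY Kt j (fun r => SigMat Kt r.2 r.1 i j * ρ r) q) i
        (diffY cw le_rfl p) (diffY (cpdYA i j j) le_rfl p)]
  -- expansion of pdY of Yfun
  have hY : ∀ i, pdY Kt i (Yfun Kt ρ u v i) p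
      = (pdY Kt i (fun r => SigMat Kt r.2 r.1 i 0 * ρ r) p
            * pdY Kt 0 (fun r => u r * v r) p
          + SigMat Kt p.2 p.1 i 0 * ρ p * pdY Kt i (pdY Kt 0 (fun r => u r * v r)) p
        - (pdY Kt i (fun r => u r * v r) p
              * pdY Kt 0 (fun r => SigMat Kt r.2 r.1 i 0 * ρ r) p
            + (u p * v p)
              * pdY Kt i (pdY Kt 0 (fun r => SigMat Kt r.2 r.1 i 0 * ρ r)) p))
        + (pdY Kt i (fun r => SigMat Kt r.2 r.1 i 1 * ρ r) p
            * pdY Kt 1 (fun r => u r * v r) p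
          + SigMat Kt p.2 p.1 i 1 * ρ p * pdY Kt i (pdY Kt 1 (fun r => u r * v r)) p
        - (pdY Kt i (fun r => u r * v r) p
              * pdY Kt 1 (fun r => SigMat Kt r.2 r.1 i 1 * ρ r) p
            + (u p * v p)
              * pdY Kt i (pdY Kt 1 (fun r => SigMat Kt r.2 r.1 i 1 * ρ r)) p))
        + (pdY Kt i (fun q => Fdrift Kt q.2 q.1 i * ρ q) p * (u p * v p)
          + (Fdrift Kt p.2 p.1 i * ρ p) * pdY Kt i (fun r => u r * v r) p) := by
    intro i
    have hYs : Yfun Kt ρ u v i = fun q =>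
        ((SigMat Kt q.2 q.1 i 0 * ρ q * pdY Kt 0 (fun r => u r * v r) q
            - (u q * v q) * pdY Kt 0 (fun r => SigMat Kt r.2 r.1 i 0 * ρ r) q)
          + (SigMat Kt q.2 q.1 i 1 * ρ q * pdY Kt 1 (fun r => u r * v r) q
            - (u q * v q) * pdY Kt 1 (fun r => SigMat Kt r.2 r.1 i 1 * ρ r) q))
        + (Fdrift Kt q.2 q.1 i * ρ q) * (u q * v q) := by
      funext q
      rw [Yfun, Fin.sum_univ_two]
    have cg : ∀ j, ContDiff ℝ 1 (fun q =>
        SigMat Kt q.2 q.1 i j * ρ q * pdY Kt j (fun r => u r * v r) q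
          - (u q * v q) * pdY Kt j (fun r => SigMat Kt r.2 r.1 i j * ρ r) q) :=
      fun j => ((cA1 i j).mul (cpdYw j)).sub (cw.mul (cpdYA i j j))
    rw [hYs]
    rw [pdY_add
        (f := fun q =>
          (SigMat Kt q.2 q.1 i 0 * ρ q * pdY Kt 0 (fun r => u r * v r) q
            - (u q * v q) * pdY Kt 0 (fun r => SigMat Kt r.2 r.1 i 0 * ρ r) q)
          + (SigMat Kt q.2 q.1 i 1 * ρ q * pdY Kt 1 (fun r => u r * v r) q
            - (u q * v q) * pdY Kt 1 (fun r => SigMat Kt r.2 r.1 i 1 * ρ r) q))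
        (g := fun q => (Fdrift Kt q.2 q.1 i * ρ q) * (u q * v q)) i
        (diffY ((cg 0).add (cg 1)) le_rfl p) (diffY ((cF i).mul cw) le_rfl p),
      pdY_add
        (f := fun q => SigMat Kt q.2 q.1 i 0 * ρ q * pdY Kt 0 (fun r => u r * v r) q
            - (u q * v q) * pdY Kt 0 (fun r => SigMat Kt r.2 r.1 i 0 * ρ r) q)
        (g := fun q => SigMat Kt q.2 q.1 i 1 * ρ q * pdY Kt 1 (fun r => u r * v r) q
            - (u q * v q) * pdY Kt 1 (fun r => SigMat Kt r.2 r.1 i 1 * ρ r) q) i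
        (diffY (cg 0) le_rfl p) (diffY (cg 1) le_rfl p),
      hg i 0, hg i 1,
      pdY_mul (f := fun q : PState Kt => Fdrift Kt q.2 q.1 i * ρ q)
        (g := fun r => u r * v r) i (diffY (cF i) le_rfl p) (diffY cw le_rfl p)]
  -- symmetry rewrites
  have hS10 : SigMat Kt p.2 p.1 1 0 = SigMat Kt p.2 p.1 0 1 := SigMat_symm p.2 p.1 1 0
  have hA10 : (fun r : PState Kt => SigMat Kt r.2 r.1 1 0 * ρ r)
      = (fun r : PState Kt => SigMat Kt r.2 r.1 0 1 * ρ r) := by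
    funext r
    rw [SigMat_symm r.2 r.1 1 0]
  -- assemble
  rw [Fin.sum_univ_two, hY 0, hY 1, L0P, L0P, L0starP]
  simp only [Fin.sum_univ_two, hwp, h2w, hS10, hA10]
  ring

end PWY

/-! ### Properties of `Yfun` and `Efun` -/

section Props
variable {Kt : ℕ} {κ σ : ℝ} {ρ u v : PState Kt → ℝ}

lemma pdY_slice_periodic {F : PState Kt → ℝ} (hF : ∀ η, ZPeriodic fun y => F (y, η))
    (j : Fin 2) (η : EtaSpace Kt) : ZPeriodic fun y => pdY Kt j F (y, η) :=
  pd_periodic (hF η) j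

lemma contDiff_Yfun (hC2 : ContDiff ℝ 2 ρ) (hu : ContDiff ℝ (⊤ : ℕ∞) u) (hv : ContDiff ℝ (⊤ : ℕ∞) v)
    (i : Fin 2) : ContDiff ℝ 1 (Yfun Kt ρ u v i) := by
  have cu : ContDiff ℝ 1 u := hu.of_le (by simp)
  have cv : ContDiff ℝ 1 v := hv.of_le (by simp)
  have cρ : ContDiff ℝ 1 ρ := hC2.of_le (by exact_mod_cast one_le_two)
  have cw : ContDiff ℝ 1 (fun q => u q * v q) := cu.mul cv
  have cA : ∀ j : Fin 2, ContDiff ℝ 2 (fun r : PState Kt => SigMat Kt r.2 r.1 i j * ρ r) :=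
    fun j => ((contDiff_SigMat i j).of_le (WithTop.coe_le_coe.mpr le_top)).mul hC2
  exact ContDiff.add
    (ContDiff.sum fun j _ =>
      ((((cA j).of_le (by exact_mod_cast one_le_two)).mul
        ((contDiff_pdY (n := ((⊤ : ℕ∞) : WithTop ℕ∞)) (hu.mul hv) (by simp) j).of_le (by simp))).sub
        (cw.mul (contDiff_pdY (cA j) (by norm_num) j))))
    ((((contDiff_Fdrift i).of_le (by simp)).mul cρ).mul cw)

lemma contDiff_Efun (hC2 : ContDiff ℝ 2 ρ) (hu : ContDiff ℝ (⊤ : ℕ∞) u) (hv : ContDiff ℝ (⊤ : ℕ∞) v)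
    (i : ModeIdx Kt) : ContDiff ℝ 1 (Efun Kt κ σ ρ u v i) := by
  have cu : ContDiff ℝ 1 u := hu.of_le (by simp)
  have cv : ContDiff ℝ 1 v := hv.of_le (by simp)
  have cρ : ContDiff ℝ 1 ρ := hC2.of_le (by exact_mod_cast one_le_two)
  have cw : ContDiff ℝ 1 (fun q => u q * v q) := cu.mul cv
  exact ContDiff.sub
    (contDiff_const.mul
      ((cρ.mul ((contDiff_pdE (n := ((⊤ : ℕ∞) : WithTop ℕ∞)) (hu.mul hv) (by exact_mod_cast le_top) i).of_le (by simp))).sub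
        (cw.mul (contDiff_pdE hC2 (by norm_num) i))))
    ((((contDiff_mulVecGamma κ σ i).of_le (by simp)).mul cρ).mul cw)

lemma Yfun_periodic (hper : ∀ η, ZPeriodic fun y => ρ (y, η))
    (hpu : ∀ η, ZPeriodic fun y => u (y, η)) (hpv : ∀ η, ZPeriodic fun y => v (y, η))
    (i : Fin 2) (η : EtaSpace Kt) : ZPeriodic fun y => Yfun Kt ρ u v i (y, η) := by
  intro x m
  have hwper : ∀ η', ZPeriodic fun y => u (y, η') * v (y, η') := by
    intro η' z l
    have h1 : u (z + fun a => (l a : ℝ), η') = u (z, η') := hpu η' z l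
    have h2 : v (z + fun a => (l a : ℝ), η') = v (z, η') := hpv η' z l
    simp only [h1, h2]
  have hAper : ∀ (a b : Fin 2) η', ZPeriodic fun y => SigMat Kt η' y a b * ρ (y, η') := by
    intro a b η' z l
    have h1 : SigMat Kt η' (z + fun c => (l c : ℝ)) a b = SigMat Kt η' z a b :=
      SigMat_periodic η' a b z l
    have h2 : ρ (z + fun c => (l c : ℝ), η') = ρ (z, η') := hper η' z l
    simp only [h1, h2]
  have hS : ∀ a b, SigMat Kt η (x + fun l => (m l : ℝ)) a b = SigMat Kt η x a b :=
    fun a b => SigMat_periodic η a b x m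
  have hρ : ρ (x + fun l => (m l : ℝ), η) = ρ (x, η) := hper η x m
  have hu' : u (x + fun l => (m l : ℝ), η) = u (x, η) := hpu η x m
  have hv' : v (x + fun l => (m l : ℝ), η) = v (x, η) := hpv η x m
  have hpw : ∀ j, pdY Kt j (fun r => u r * v r) (x + fun l => (m l : ℝ), η)
      = pdY Kt j (fun r => u r * v r) (x, η) :=
    fun j => pdY_slice_periodic (F := fun r => u r * v r) hwper j η x m
  have hpA : ∀ (j a b : Fin 2),
      pdY Kt j (fun r => SigMat Kt r.2 r.1 a b * ρ r) (x + fun l => (m l : ℝ), η)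
        = pdY Kt j (fun r => SigMat Kt r.2 r.1 a b * ρ r) (x, η) :=
    fun j a b => pdY_slice_periodic (F := fun r => SigMat Kt r.2 r.1 a b * ρ r)
      (hAper a b) j η x m
  have hF : Fdrift Kt η (x + fun l => (m l : ℝ)) i = Fdrift Kt η x i :=
    Fdrift_periodic η i x m
  simp only [Yfun, hS, hρ, hu', hv', hpw, hpA, hF]

lemma Efun_vanish {R : ℝ} (hw0 : ∀ p : PState Kt, R < euclNorm p.2 → u p * v p = 0)
    (i : ModeIdx Kt) (p : PState Kt) (hp : R < euclNorm p.2) : Efun Kt κ σ ρ u v i p = 0 := by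
  have h1 : pdE Kt i (fun r => u r * v r) p = 0 :=
    pdE_vanish (f := fun r => u r * v r) hw0 p hp i
  have h2 : u p * v p = 0 := hw0 p hp
  simp only [Efun, h1, h2, mul_zero, zero_mul, sub_zero, add_zero]

end Props

section Final
variable {Kt : ℕ} {κ σ : ℝ} {u : PState Kt → ℝ}

lemma contDiff_GP (hu : ContDiff ℝ (⊤ : ℕ∞) u) :
    ContDiff ℝ (⊤ : ℕ∞) (fun p => GP Kt κ σ u p) := by
  have hrw : (fun p => GP Kt κ σ u p) = fun p =>
      ((∑ i, Fdrift Kt p.2 p.1 i * pdY Kt i u p)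
        + ∑ i, ∑ j, SigMat Kt p.2 p.1 i j * pdY Kt i (pdY Kt j u) p)
      + (-(∑ i, (GammaMat Kt κ σ).mulVec p.2 i * pdE Kt i u p)
        + ∑ i, ∑ j, (PiMat Kt κ σ * GammaMat Kt κ σ) i j * pdE Kt i (pdE Kt j u) p) := by
    funext p
    simp only [GP, L0P, LEP, dotProduct]
  rw [hrw]
  refine ContDiff.add (ContDiff.add ?_ ?_) (ContDiff.add (ContDiff.neg ?_) ?_)
  · exact ContDiff.sum fun i _ => (contDiff_Fdrift i).mul (contDiff_pdY hu (by simp) i)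
  · exact ContDiff.sum fun i _ => ContDiff.sum fun j _ =>
      (contDiff_SigMat i j).mul (contDiff_pdY (contDiff_pdY (n := ((⊤ : ℕ∞) : WithTop ℕ∞)) hu (by exact_mod_cast le_top) j) (by simp) i)
  · exact ContDiff.sum fun i _ =>
      (contDiff_mulVecGamma κ σ i).mul (contDiff_pdE hu (by simp) i)
  · exact ContDiff.sum fun i _ => ContDiff.sum fun j _ =>
      contDiff_const.mul (contDiff_pdE (contDiff_pdE (n := ((⊤ : ℕ∞) : WithTop ℕ∞)) hu (by exact_mod_cast le_top) j) (by simp) i)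

lemma integrableOn_box (g : PState Kt → ℝ) (hg : Continuous g) (η : EtaSpace Kt) :
    IntegrableOn (fun y => g (y, η)) unitBox := by
  have : ContinuousOn (fun y => g (y, η)) unitBox :=
    (hg.comp (continuous_id.prodMk continuous_const)).continuousOn
  exact this.integrableOn_compact (isCompact_Icc (a := (0 : Fin 2 → ℝ)) (b := 1))

end Final

set_option maxHeartbeats 2000000 in
/-- Carré-du-champ / Green identity for `G` under an infinitesimally
invariant positive `C²` density `ρ`: for all `u, v ∈ C_c^∞(𝕋²×ℝ^{2K},ℝ)`,
`∫ (Gu) v ρ + ∫ u (Gv) ρ = −2 ∫ (∇_y u·Σ∇_y v + ∇_η u·ΠΓ∇_η v) ρ`. -/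
theorem green_identity_invariant_density (Kt : ℕ) (κ σ : ℝ) (hκ : 0 < κ) (hσ : 0 < σ)
    (ρ : PState Kt → ℝ) (hC2 : ContDiff ℝ 2 ρ) (hpos : ∀ p, 0 < ρ p)
    (hper : ∀ η : EtaSpace Kt, ZPeriodic fun y => ρ (y, η))
    (hinv : ∀ p : PState Kt, GstarP Kt κ σ ρ p = 0)
    (u v : PState Kt → ℝ) (hu : ContDiff ℝ (⊤ : ℕ∞) u) (hv : ContDiff ℝ (⊤ : ℕ∞) v)
    (hpu : ∀ η : EtaSpace Kt, ZPeriodic fun y => u (y, η))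
    (hpv : ∀ η : EtaSpace Kt, ZPeriodic fun y => v (y, η))
    (hsu : ∃ R : ℝ, ∀ p : PState Kt, R ≤ euclNorm p.2 → u p = 0)
    (hsv : ∃ R : ℝ, ∀ p : PState Kt, R ≤ euclNorm p.2 → v p = 0) :
    (∫ η : EtaSpace Kt, ∫ y in unitBox, GP Kt κ σ u (y, η) * v (y, η) * ρ (y, η))
        + ∫ η : EtaSpace Kt, ∫ y in unitBox, u (y, η) * GP Kt κ σ v (y, η) * ρ (y, η)
      = -2 * ∫ η : EtaSpace Kt, ∫ y in unitBox,
          ((∑ i, pdY Kt i u (y, η) * ∑ j, SigMat Kt η y i j * pdY Kt j v (y, η))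
              + ∑ i, pdE Kt i u (y, η) *
                  ∑ j, (PiMat Kt κ σ * GammaMat Kt κ σ) i j * pdE Kt j v (y, η))
            * ρ (y, η) := by
  classical
  obtain ⟨Ru, hRu⟩ := hsu
  obtain ⟨Rv, hRv⟩ := hsv
  set R : ℝ := max Ru Rv with hR
  have hu0 : ∀ p : PState Kt, R < euclNorm p.2 → u p = 0 :=
    fun p hp => hRu p (le_trans (le_max_left _ _) hp.le)
  have hv0 : ∀ p : PState Kt, R < euclNorm p.2 → v p = 0 :=
    fun p hp => hRv p (le_trans (le_max_right _ _) hp.le)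
  have hw0 : ∀ p : PState Kt, R < euclNorm p.2 → u p * v p = 0 :=
    fun p hp => by rw [hu0 p hp, zero_mul]
  -- the four integrand functions
  set f1 : PState Kt → ℝ := fun p => GP Kt κ σ u p * v p * ρ p with hf1
  set f2 : PState Kt → ℝ := fun p => u p * GP Kt κ σ v p * ρ p with hf2
  set fG : PState Kt → ℝ := fun p =>
    ((∑ i, pdY Kt i u p * ∑ j, SigMat Kt p.2 p.1 i j * pdY Kt j v p)
      + ∑ i, pdE Kt i u p *
          ∑ j, (PiMat Kt κ σ * GammaMat Kt κ σ) i j * pdE Kt j v p) * ρ p with hfG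
  set fE : PState Kt → ℝ := fun p => ∑ i, pdE Kt i (Efun Kt κ σ ρ u v i) p with hfE
  set fY : PState Kt → ℝ := fun p => ∑ i, pdY Kt i (Yfun Kt ρ u v i) p with hfY
  -- continuity
  have cont_f1 : Continuous f1 :=
    (((contDiff_GP hu).continuous).mul hv.continuous).mul hC2.continuous
  have cont_f2 : Continuous f2 :=
    ((hu.continuous).mul (contDiff_GP hv).continuous).mul hC2.continuous
  have cont_fG : Continuous fG := by
    refine Continuous.mul (Continuous.add ?_ ?_) hC2.continuous
    · exact continuous_finset_sum _ fun i _ =>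
        (contDiff_zero.mp (contDiff_pdY (n := 0) hu (by simp) i)).mul
          (continuous_finset_sum _ fun j _ =>
            ((contDiff_SigMat i j).continuous).mul
              (contDiff_zero.mp (contDiff_pdY (n := 0) hv (by simp) j)))
    · exact continuous_finset_sum _ fun i _ =>
        (contDiff_zero.mp (contDiff_pdE (n := 0) hu (by simp) i)).mul
          (continuous_finset_sum _ fun j _ =>
            continuous_const.mul (contDiff_zero.mp (contDiff_pdE (n := 0) hv (by simp) j)))
  have cont_fE : Continuous fE :=
    continuous_finset_sum _ fun i _ =>
      contDiff_zero.mp (contDiff_pdE (contDiff_Efun hC2 hu hv i) (by norm_num) i)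
  have cont_fY : Continuous fY :=
    continuous_finset_sum _ fun i _ =>
      contDiff_zero.mp (contDiff_pdY (contDiff_Yfun hC2 hu hv i) (by norm_num) i)
  -- vanishing at infinity in η
  have van_f1 : ∀ p : PState Kt, R < euclNorm p.2 → f1 p = 0 := fun p hp => by
    show GP Kt κ σ u p * v p * ρ p = 0
    rw [hv0 p hp]; ring
  have van_f2 : ∀ p : PState Kt, R < euclNorm p.2 → f2 p = 0 := fun p hp => by
    show u p * GP Kt κ σ v p * ρ p = 0
    rw [hu0 p hp]; ring
  have van_fG : ∀ p : PState Kt, R < euclNorm p.2 → fG p = 0 := fun p hp => by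
    have h1 : ∀ j, pdY Kt j v p = 0 := fun j => pdY_vanish hv0 p hp j
    have h2 : ∀ j, pdE Kt j v p = 0 := fun j => pdE_vanish hv0 p hp j
    show ((∑ i, pdY Kt i u p * ∑ j, SigMat Kt p.2 p.1 i j * pdY Kt j v p)
      + ∑ i, pdE Kt i u p *
          ∑ j, (PiMat Kt κ σ * GammaMat Kt κ σ) i j * pdE Kt j v p) * ρ p = 0
    simp [h1, h2]
  have van_fE : ∀ p : PState Kt, R < euclNorm p.2 → fE p = 0 := fun p hp => by
    show ∑ i, pdE Kt i (Efun Kt κ σ ρ u v i) p = 0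
    exact Finset.sum_eq_zero fun i _ =>
      pdE_vanish (fun q hq => Efun_vanish hw0 i q hq) p hp i
  -- pointwise identity
  have hpt : ∀ p : PState Kt, f1 p + f2 p = fY p + fE p - 2 * fG p := by
    intro p
    have h1 := Ypart (ρ := ρ) (u := u) (v := v) hC2 hu hv p
    have h2 := Epart (κ := κ) (σ := σ) (ρ := ρ) (u := u) (v := v) hC2 hu hv p
    have h3 : L0starP Kt ρ p + LEstarP Kt κ σ ρ p = 0 := by
      have h4 := hinv p
      simpa [GstarP] using h4
    show GP Kt κ σ u p * v p * ρ p + u p * GP Kt κ σ v p * ρ p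
      = (∑ i, pdY Kt i (Yfun Kt ρ u v i) p) + (∑ i, pdE Kt i (Efun Kt κ σ ρ u v i) p)
        - 2 * (((∑ i, pdY Kt i u p * ∑ j, SigMat Kt p.2 p.1 i j * pdY Kt j v p)
          + ∑ i, pdE Kt i u p *
              ∑ j, (PiMat Kt κ σ * GammaMat Kt κ σ) i j * pdE Kt j v p) * ρ p)
    rw [h1, h2]
    simp only [GP]
    linear_combination (u p * v p) * h3
  -- integrability of the inner integrals
  have int_f1 := integrable_inner_of_vanish f1 cont_f1 R van_f1
  have int_f2 := integrable_inner_of_vanish f2 cont_f2 R van_f2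
  have int_fG := integrable_inner_of_vanish fG cont_fG R van_fG
  have int_fE := integrable_inner_of_vanish fE cont_fE R van_fE
  -- the inner (y) integral identity, for each η
  have inner_eq : ∀ η : EtaSpace Kt,
      (∫ y in unitBox, f1 (y, η)) + (∫ y in unitBox, f2 (y, η))
        = (∫ y in unitBox, fE (y, η)) - 2 * ∫ y in unitBox, fG (y, η) := by
    intro η
    have i1 := integrableOn_box f1 cont_f1 η
    have i2 := integrableOn_box f2 cont_f2 η
    have iY := integrableOn_box fY cont_fY η
    have iE := integrableOn_box fE cont_fE η
    have iG := integrableOn_box fG cont_fG η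
    have hYzero : (∫ y in unitBox, fY (y, η)) = 0 := by
      have hsplit : (∫ y in unitBox, fY (y, η))
          = ∑ i, ∫ y in unitBox, pdY Kt i (Yfun Kt ρ u v i) (y, η) := by
        rw [show (fun y => fY (y, η))
            = fun y => ∑ i, pdY Kt i (Yfun Kt ρ u v i) (y, η) from rfl]
        exact integral_finset_sum _ fun i _ =>
          integrableOn_box (fun p => pdY Kt i (Yfun Kt ρ u v i) p)
            (contDiff_zero.mp (contDiff_pdY (contDiff_Yfun hC2 hu hv i) (by norm_num) i)) η
      rw [hsplit]
      exact Finset.sum_eq_zero fun i _ =>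
        integral_pdY_zero (Yfun Kt ρ u v i) (contDiff_Yfun hC2 hu hv i)
          (Yfun_periodic hper hpu hpv i) η i
    calc (∫ y in unitBox, f1 (y, η)) + (∫ y in unitBox, f2 (y, η))
        = ∫ y in unitBox, (f1 (y, η) + f2 (y, η)) := (integral_add i1 i2).symm
      _ = ∫ y in unitBox, (fY (y, η) + fE (y, η) - 2 * fG (y, η)) := by
          apply integral_congr_ae
          exact Filter.Eventually.of_forall fun y => hpt (y, η)
      _ = (∫ y in unitBox, (fY (y, η) + fE (y, η))) - ∫ y in unitBox, 2 * fG (y, η) :=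
          integral_sub (iY.add iE) (iG.const_mul 2)
      _ = (∫ y in unitBox, fY (y, η)) + (∫ y in unitBox, fE (y, η))
            - 2 * ∫ y in unitBox, fG (y, η) := by
          rw [integral_add iY iE, integral_const_mul 2]
      _ = (∫ y in unitBox, fE (y, η)) - 2 * ∫ y in unitBox, fG (y, η) := by
          rw [hYzero]; ring
  -- the η-integral of fE vanishes
  have hEzero : (∫ η : EtaSpace Kt, ∫ y in unitBox, fE (y, η)) = 0 := by
    rw [swap_integral_of_vanish fE cont_fE R van_fE]
    have hinner : ∀ y : Fin 2 → ℝ, (∫ η : EtaSpace Kt, fE (y, η)) = 0 := by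
      intro y
      have hsplit : (∫ η : EtaSpace Kt, fE (y, η))
          = ∑ i, ∫ η : EtaSpace Kt, pdE Kt i (Efun Kt κ σ ρ u v i) (y, η) := by
        rw [show (fun η => fE (y, η))
            = fun η => ∑ i, pdE Kt i (Efun Kt κ σ ρ u v i) (y, η) from rfl]
        refine integral_finset_sum _ fun i _ => ?_
        have hcont : Continuous (fun η => pdE Kt i (Efun Kt κ σ ρ u v i) (y, η)) :=
          (contDiff_zero.mp (contDiff_pdE (contDiff_Efun hC2 hu hv i) (by norm_num) i)).comp
            (continuous_const.prodMk continuous_id)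
        have hsupp : HasCompactSupport (fun η => pdE Kt i (Efun Kt κ σ ρ u v i) (y, η)) :=
          hasCompactSupport_of_vanish (R := R) fun η hη =>
            pdE_vanish (fun q hq => Efun_vanish hw0 i q hq) (y, η) hη i
        exact hcont.integrable_of_hasCompactSupport hsupp
      rw [hsplit]
      exact Finset.sum_eq_zero fun i _ =>
        integral_pdE_zero (Efun Kt κ σ ρ u v i) (contDiff_Efun hC2 hu hv i) R
          (fun q hq => Efun_vanish hw0 i q hq) y i
    calc (∫ y in unitBox, ∫ η : EtaSpace Kt, fE (y, η))
        = ∫ y in unitBox, (0 : ℝ) := by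
          apply integral_congr_ae
          exact Filter.Eventually.of_forall fun y => hinner y
      _ = 0 := integral_zero _ _
  -- assemble
  have main : (∫ η : EtaSpace Kt, ∫ y in unitBox, f1 (y, η))
      + (∫ η : EtaSpace Kt, ∫ y in unitBox, f2 (y, η))
      = -2 * ∫ η : EtaSpace Kt, ∫ y in unitBox, fG (y, η) := by
    calc (∫ η : EtaSpace Kt, ∫ y in unitBox, f1 (y, η))
        + (∫ η : EtaSpace Kt, ∫ y in unitBox, f2 (y, η))
        = ∫ η : EtaSpace Kt,
            ((∫ y in unitBox, f1 (y, η)) + (∫ y in unitBox, f2 (y, η))) :=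
          (integral_add int_f1 int_f2).symm
      _ = ∫ η : EtaSpace Kt,
            ((∫ y in unitBox, fE (y, η)) - 2 * ∫ y in unitBox, fG (y, η)) := by
          apply integral_congr_ae
          exact Filter.Eventually.of_forall inner_eq
      _ = (∫ η : EtaSpace Kt, ∫ y in unitBox, fE (y, η))
            - 2 * ∫ η : EtaSpace Kt, ∫ y in unitBox, fG (y, η) := by
          rw [integral_sub int_fE (int_fG.const_mul 2), integral_const_mul 2]
      _ = -2 * ∫ η : EtaSpace Kt, ∫ y in unitBox, fG (y, η) := by
          rw [hEzero]; ring
  exact main
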